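/- Let (Σ, θ) be a topological space. The subword topology on Σ*, generated by the sets [U₁,…,U_n] := Σ*U₁Σ*⋯Σ*U_nΣ* for U_i open in θ, is the least fixed point of the function E mapping a topology τ on Σ* to the topology generated by the sets ↑_{≤*}(UV) for U, V ∈ τ and ↑_{≤*}(W) for W ∈ θ. -/

import Mathlib

/-- A topology is Noetherian when every subset is compact. -/
def Noeth {X : Type*} (t : TopologicalSpace X) : Prop :=
  ∀ s : Set X, @IsCompact X t s

/-- Concatenation of sets of words: `UV = { uv : u ∈ U, v ∈ V }`. -/
def cat {α : Type*} (U V : Set (List α)) : Set (List α) :=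
  {w | ∃ u ∈ U, ∃ v ∈ V, w = u ++ v}

/-- A set of letters viewed as a set of length-1 words. -/
def lift1 {α : Type*} (U : Set α) : Set (List α) :=
  {w | ∃ a ∈ U, w = [a]}

/-- The specialisation preorder of a topology. -/
def specLe {α : Type*} (θ : TopologicalSpace α) (x y : α) : Prop :=
  ∀ U : Set α, θ.IsOpen U → x ∈ U → y ∈ U

/-- The word embedding (subword) quasi-order induced by the specialisation
preorder of `θ`. -/
def wordEmb {α : Type*} (θ : TopologicalSpace α) : List α → List α → Prop :=
  List.SublistForall₂ (specLe θ)

/-- Upward closure with respect to the word embedding quasi-order. -/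
def upEmb {α : Type*} (θ : TopologicalSpace α) (S : Set (List α)) : Set (List α) :=
  {w | ∃ u ∈ S, wordEmb θ u w}

/-- The refinement function for the subword topology: it maps `τ` to the topology
generated by the sets `↑(UV)` for `U, V ∈ τ` and `↑W` for `W ∈ θ`. -/
def Esub {α : Type*} (θ : TopologicalSpace α) (τ : TopologicalSpace (List α)) :
    TopologicalSpace (List α) :=
  TopologicalSpace.generateFrom
    ({W | ∃ U V : Set (List α), τ.IsOpen U ∧ τ.IsOpen V ∧ W = upEmb θ (cat U V)} ∪
     {W' | ∃ W : Set α, θ.IsOpen W ∧ W' = upEmb θ (lift1 W)})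

/-- The set of words `Σ* U₁ Σ* U₂ ⋯ Σ* Uₙ Σ*`. -/
def openword {α : Type*} (L : List (Set α)) : Set (List α) :=
  L.foldr (fun U acc => cat Set.univ (cat (lift1 U) acc)) Set.univ

/-- The subword topology on `Σ*`. -/
def subwordTop {α : Type*} (θ : TopologicalSpace α) : TopologicalSpace (List α) :=
  TopologicalSpace.generateFrom
    {V | ∃ L : List (Set α), (∀ U ∈ L, θ.IsOpen U) ∧ V = openword L}

/-!
Subword-open sets are upward closed for `≤*`, and on upward-closed sets concatenation
distributes over binary intersections (of two factorisations `uv = u'v'` of a word, one prefix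
embeds into the other); it always distributes over unions. Since
`[U₁,…,U_m][V₁,…,V_n] = [U₁,…,U_m,V₁,…,V_n]`, the concatenation of two subword-open sets is
therefore subword-open, so every generator of `E(subword)` is subword-open. Conversely
`[U₁,…,U_n] = ↑([U₁][U₂,…,U_n])` with `[U₁] = ↑U₁`, so by induction on `n` the subword topology
is contained in every `τ` with `E(τ) ⊆ τ`; as `E` is monotone, `E(subword)` is such a `τ`.
-/

namespace List

variable {α β γ : Type*} {r : α → β → Prop}

theorem sublistForall₂_cons_left_iff {a : α} {l : List α} {w : List β} :
    SublistForall₂ r (a :: l) w ↔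
      ∃ w₁ b w₂, w = w₁ ++ b :: w₂ ∧ r a b ∧ SublistForall₂ r l w₂ := by
  constructor
  · intro h
    induction w with
    | nil => cases h
    | cons c w ih =>
      cases h with
      | cons hr hl => exact ⟨[], c, w, rfl, hr, hl⟩
      | cons_right h =>
        obtain ⟨w₁, b, w₂, rfl, hb, hl⟩ := ih h
        exact ⟨c :: w₁, b, w₂, rfl, hb, hl⟩
  · rintro ⟨w₁, b, w₂, rfl, hb, hl⟩
    induction w₁ with
    | nil => exact .cons hb hl
    | cons c w₁ ih => exact .cons_right ih

theorem SublistForall₂.of_sublist_right {l : List α} {w w' : List β}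
    (h : SublistForall₂ r l w) (hw : w <+ w') : SublistForall₂ r l w' := by
  obtain ⟨m, hm, hmw⟩ := sublistForall₂_iff.mp h
  exact sublistForall₂_iff.mpr ⟨m, hm, hmw.trans hw⟩

theorem SublistForall₂.append {l m : List α} {u v : List β}
    (hl : SublistForall₂ r l u) (hm : SublistForall₂ r m v) :
    SublistForall₂ r (l ++ m) (u ++ v) := by
  induction hl with
  | nil => exact hm.of_sublist_right (sublist_append_right _ _)
  | cons hr _ ih => exact .cons hr ih
  | cons_right _ ih => exact .cons_right ih

theorem sublistForall₂_append_left_iff {l m : List α} {w : List β} :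
    SublistForall₂ r (l ++ m) w ↔
      ∃ u v, w = u ++ v ∧ SublistForall₂ r l u ∧ SublistForall₂ r m v := by
  refine ⟨fun h => ?_, fun ⟨u, v, hw, hu, hv⟩ => hw ▸ hu.append hv⟩
  induction l generalizing w with
  | nil => exact ⟨[], w, rfl, .nil, h⟩
  | cons a l ih =>
    obtain ⟨w₁, b, w₂, rfl, hb, h⟩ := sublistForall₂_cons_left_iff.mp h
    obtain ⟨u, v, rfl, hu, hv⟩ := ih h
    exact ⟨w₁ ++ b :: u, v, by simp, sublistForall₂_cons_left_iff.mpr ⟨w₁, b, u, rfl, hb, hu⟩, hv⟩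

theorem SublistForall₂.comp {s : β → γ → Prop} {l : List α} {w : List β} {w' : List γ}
    (h : SublistForall₂ r l w) (h' : SublistForall₂ s w w') :
    SublistForall₂ (fun a c => ∃ b, r a b ∧ s b c) l w' := by
  induction h' generalizing l with
  | nil => cases h; exact .nil
  | cons hs _ ih =>
    cases h with
    | nil => exact .nil
    | cons hr h => exact .cons ⟨_, hr, hs⟩ (ih h)
    | cons_right h => exact .cons_right (ih h)
  | cons_right _ ih => exact .cons_right (ih h)

theorem SublistForall₂.imp_of_mem {s : α → β → Prop} {l : List α} {w : List β}
    (h : SublistForall₂ r l w) (hrs : ∀ a ∈ l, ∀ b, r a b → s a b) :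
    SublistForall₂ s l w := by
  induction h with
  | nil => exact .nil
  | cons hr _ ih =>
    exact .cons (hrs _ mem_cons_self _ hr) (ih fun a ha => hrs a (mem_cons_of_mem _ ha))
  | cons_right _ ih => exact .cons_right (ih hrs)

end List

open List TopologicalSpace

section Words

variable {α : Type*}

theorem mem_openword {L : List (Set α)} {w : List α} :
    w ∈ openword L ↔ SublistForall₂ (fun U a => a ∈ U) L w := by
  induction L generalizing w with
  | nil => exact ⟨fun _ => .nil, fun _ => trivial⟩
  | cons U L ih =>
    rw [sublistForall₂_cons_left_iff]
    constructor
    · rintro ⟨u, -, v, ⟨x, ⟨a, ha, rfl⟩, y, hy, rfl⟩, rfl⟩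
      exact ⟨u, a, y, rfl, ha, ih.mp hy⟩
    · rintro ⟨w₁, b, w₂, rfl, hb, h⟩
      exact ⟨w₁, trivial, b :: w₂, ⟨[b], ⟨b, hb, rfl⟩, w₂, ih.mpr h, rfl⟩, rfl⟩

theorem openword_append (L M : List (Set α)) :
    openword (L ++ M) = cat (openword L) (openword M) := by
  ext w
  simp only [mem_openword, sublistForall₂_append_left_iff]
  constructor
  · rintro ⟨u, v, rfl, hu, hv⟩
    exact ⟨u, mem_openword.mpr hu, v, mem_openword.mpr hv, rfl⟩
  · rintro ⟨u, hu, v, hv, rfl⟩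
    exact ⟨u, v, rfl, mem_openword.mp hu, mem_openword.mp hv⟩

theorem cat_sUnion_left (S : Set (Set (List α))) (V : Set (List α)) :
    cat (⋃₀ S) V = ⋃₀ ((cat · V) '' S) := by
  ext w
  constructor
  · rintro ⟨u, ⟨T, hT, hu⟩, v, hv, rfl⟩
    exact ⟨cat T V, ⟨T, hT, rfl⟩, u, hu, v, hv, rfl⟩
  · rintro ⟨_, ⟨T, hT, rfl⟩, u, hu, v, hv, rfl⟩
    exact ⟨u, ⟨T, hT, hu⟩, v, hv, rfl⟩

theorem cat_sUnion_right (U : Set (List α)) (S : Set (Set (List α))) :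
    cat U (⋃₀ S) = ⋃₀ (cat U '' S) := by
  ext w
  constructor
  · rintro ⟨u, hu, v, ⟨T, hT, hv⟩, rfl⟩
    exact ⟨cat U T, ⟨T, hT, rfl⟩, u, hu, v, hv, rfl⟩
  · rintro ⟨_, ⟨T, hT, rfl⟩, u, hu, v, hv, rfl⟩
    exact ⟨u, hu, v, ⟨T, hT, hv⟩, rfl⟩

end Words

section Embedding

variable {α : Type*} {θ : TopologicalSpace α}

instance : Std.Refl (specLe θ) := ⟨fun _ _ _ h => h⟩

def IsUpperEmb (θ : TopologicalSpace α) (S : Set (List α)) : Prop :=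
  ∀ ⦃u⦄, u ∈ S → ∀ ⦃w⦄, wordEmb θ u w → w ∈ S

theorem upEmb_eq_self {S : Set (List α)} (hS : IsUpperEmb θ S) : upEmb θ S = S :=
  Set.Subset.antisymm (fun _ ⟨_, hu, huw⟩ => hS hu huw)
    (fun w hw => ⟨w, hw, (Sublist.refl w).sublistForall₂⟩)

theorem IsUpperEmb.cat {U V : Set (List α)} (hU : IsUpperEmb θ U) (hV : IsUpperEmb θ V) :
    IsUpperEmb θ (cat U V) := by
  rintro _ ⟨u, hu, v, hv, rfl⟩ w huvw
  obtain ⟨u', v', rfl, huu', hvv'⟩ := sublistForall₂_append_left_iff.mp huvw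
  exact ⟨u', hU hu huu', v', hV hv hvv', rfl⟩

theorem isUpperEmb_openword {L : List (Set α)} (hL : ∀ U ∈ L, θ.IsOpen U) :
    IsUpperEmb θ (openword L) := by
  intro u hu w huw
  rw [mem_openword] at hu ⊢
  exact (hu.comp huw).imp_of_mem fun U hU a ⟨b, hb, hba⟩ => hba U (hL U hU) hb

theorem IsUpperEmb.of_isOpen_subwordTop {W : Set (List α)} (hW : (subwordTop θ).IsOpen W) :
    IsUpperEmb θ W := by
  induction hW with
  | basic V hV => obtain ⟨L, hL, rfl⟩ := hV; exact isUpperEmb_openword hL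
  | univ => exact fun _ _ _ _ => trivial
  | inter _ _ _ _ ihs iht => exact fun u hu w huw => ⟨ihs hu.1 huw, iht hu.2 huw⟩
  | sUnion _ _ ih => exact fun u ⟨T, hT, hu⟩ w huw => ⟨T, hT, ih T hT hu huw⟩

theorem cat_inter_left {U₁ U₂ : Set (List α)} (V : Set (List α))
    (h₁ : IsUpperEmb θ U₁) (h₂ : IsUpperEmb θ U₂) :
    cat (U₁ ∩ U₂) V = cat U₁ V ∩ cat U₂ V := by
  refine Set.Subset.antisymm
    (fun _ ⟨u, ⟨hu₁, hu₂⟩, v, hv, hw⟩ => ⟨⟨u, hu₁, v, hv, hw⟩, ⟨u, hu₂, v, hv, hw⟩⟩) ?_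
  rintro w ⟨⟨u, hu, v, hv, rfl⟩, ⟨u', hu', v', hv', huv⟩⟩
  rcases append_eq_append_iff.mp huv with ⟨m, rfl, -⟩ | ⟨m, rfl, -⟩
  · exact ⟨u ++ m, ⟨h₁ hu (sublist_append_left u m).sublistForall₂, hu'⟩, v', hv',
      by simpa using huv⟩
  · exact ⟨u' ++ m, ⟨hu, h₂ hu' (sublist_append_left u' m).sublistForall₂⟩, v, hv, rfl⟩

theorem cat_inter_right (U : Set (List α)) {V₁ V₂ : Set (List α)}
    (h₁ : IsUpperEmb θ V₁) (h₂ : IsUpperEmb θ V₂) :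
    cat U (V₁ ∩ V₂) = cat U V₁ ∩ cat U V₂ := by
  refine Set.Subset.antisymm
    (fun _ ⟨u, hu, v, ⟨hv₁, hv₂⟩, hw⟩ => ⟨⟨u, hu, v, hv₁, hw⟩, ⟨u, hu, v, hv₂, hw⟩⟩) ?_
  rintro w ⟨⟨u, hu, v, hv, rfl⟩, ⟨u', hu', v', hv', huv⟩⟩
  rcases append_eq_append_iff.mp huv with ⟨m, -, rfl⟩ | ⟨m, -, rfl⟩
  · exact ⟨u, hu, m ++ v', ⟨hv, h₂ hv' (sublist_append_right m v').sublistForall₂⟩, rfl⟩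
  · exact ⟨u', hu', m ++ v, ⟨h₁ hv (sublist_append_right m v).sublistForall₂, hv'⟩, huv⟩

theorem upEmb_lift1 {U : Set α} (hU : θ.IsOpen U) : upEmb θ (lift1 U) = openword [U] := by
  ext w
  simp only [mem_openword, sublistForall₂_cons_left_iff]
  constructor
  · rintro ⟨_, ⟨a, ha, rfl⟩, haw⟩
    obtain ⟨w₁, b, w₂, rfl, hab, -⟩ := sublistForall₂_cons_left_iff.mp haw
    exact ⟨w₁, b, w₂, rfl, hab U hU ha, .nil⟩
  · rintro ⟨w₁, b, w₂, rfl, hb, -⟩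
    exact ⟨[b], ⟨b, hb, rfl⟩,
      sublistForall₂_cons_left_iff.mpr ⟨w₁, b, w₂, rfl, fun _ _ h => h, .nil⟩⟩

theorem openword_cons {U : Set α} {L : List (Set α)} (hUL : ∀ V ∈ U :: L, θ.IsOpen V) :
    openword (U :: L) = upEmb θ (cat (upEmb θ (lift1 U)) (openword L)) := by
  rw [upEmb_lift1 (hUL U mem_cons_self), ← openword_append, singleton_append,
    upEmb_eq_self (isUpperEmb_openword hUL)]

end Embedding

section SubwordTopology

variable {α : Type*} {θ : TopologicalSpace α}

theorem isOpen_openword {L : List (Set α)} (hL : ∀ U ∈ L, θ.IsOpen U) :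
    (subwordTop θ).IsOpen (openword L) :=
  GenerateOpen.basic _ ⟨L, hL, rfl⟩

theorem isOpen_cat_openword_right {U : Set (List α)} (hU : (subwordTop θ).IsOpen U)
    {M : List (Set α)} (hM : ∀ V ∈ M, θ.IsOpen V) :
    (subwordTop θ).IsOpen (cat U (openword M)) := by
  induction hU with
  | basic T hT =>
    obtain ⟨L, hL, rfl⟩ := hT
    rw [← openword_append]
    exact isOpen_openword fun V hV => (mem_append.mp hV).elim (hL V) (hM V)
  | univ => exact openword_append [] M ▸ isOpen_openword hM
  | inter _ _ hs ht ihs iht =>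
    rw [cat_inter_left _ (.of_isOpen_subwordTop hs) (.of_isOpen_subwordTop ht)]
    exact GenerateOpen.inter _ _ ihs iht
  | sUnion _ _ ih =>
    rw [cat_sUnion_left]
    exact GenerateOpen.sUnion _ (by rintro _ ⟨T, hT, rfl⟩; exact ih T hT)

theorem isOpen_cat {U V : Set (List α)}
    (hU : (subwordTop θ).IsOpen U) (hV : (subwordTop θ).IsOpen V) :
    (subwordTop θ).IsOpen (cat U V) := by
  induction hV with
  | basic T hT => obtain ⟨M, hM, rfl⟩ := hT; exact isOpen_cat_openword_right hU hM
  | univ => exact isOpen_cat_openword_right (M := []) hU (by simp)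
  | inter _ _ hs ht ihs iht =>
    rw [cat_inter_right _ (.of_isOpen_subwordTop hs) (.of_isOpen_subwordTop ht)]
    exact GenerateOpen.inter _ _ ihs iht
  | sUnion _ _ ih =>
    rw [cat_sUnion_right]
    exact GenerateOpen.sUnion _ (by rintro _ ⟨T, hT, rfl⟩; exact ih T hT)

theorem Esub_mono {τ τ' : TopologicalSpace (List α)} (h : τ ≤ τ') : Esub θ τ ≤ Esub θ τ' := by
  refine le_generateFrom ?_
  rintro _ (⟨U, V, hU, hV, rfl⟩ | ⟨W, hW, rfl⟩)
  · exact GenerateOpen.basic _ (.inl ⟨U, V, h U hU, h V hV, rfl⟩)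
  · exact GenerateOpen.basic _ (.inr ⟨W, hW, rfl⟩)

-- Mathlib orders topologies by fineness: `σ ≤ Esub θ σ` says that `E(σ) ⊆ σ`.
theorem le_subwordTop_of_le_Esub {σ : TopologicalSpace (List α)} (hσ : σ ≤ Esub θ σ) :
    σ ≤ subwordTop θ := by
  have hlift : ∀ U, θ.IsOpen U → σ.IsOpen (upEmb θ (lift1 U)) := fun U hU =>
    hσ _ (GenerateOpen.basic _ (.inr ⟨U, hU, rfl⟩))
  have hcat : ∀ U V, σ.IsOpen U → σ.IsOpen V → σ.IsOpen (upEmb θ (cat U V)) := fun U V hU hV =>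
    hσ _ (GenerateOpen.basic _ (.inl ⟨U, V, hU, hV, rfl⟩))
  refine le_generateFrom ?_
  rintro _ ⟨L, hL, rfl⟩
  induction L with
  | nil => exact σ.isOpen_univ
  | cons U L ih =>
    rw [openword_cons hL]
    exact hcat _ _ (hlift U (hL U mem_cons_self)) (ih fun V hV => hL V (mem_cons_of_mem U hV))

theorem subwordTop_le_Esub : subwordTop θ ≤ Esub θ (subwordTop θ) := by
  refine le_generateFrom ?_
  rintro _ (⟨U, V, hU, hV, rfl⟩ | ⟨W, hW, rfl⟩)
  · rw [upEmb_eq_self ((IsUpperEmb.of_isOpen_subwordTop hU).cat (.of_isOpen_subwordTop hV))]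
    exact isOpen_cat hU hV
  · rw [upEmb_lift1 hW]
    exact isOpen_openword (by simpa using hW)

end SubwordTopology

theorem stmt15 {α : Type*} (θ : TopologicalSpace α) :
    Esub θ (subwordTop θ) = subwordTop θ ∧
      ∀ σ : TopologicalSpace (List α), Esub θ σ = σ →
        ∀ W : Set (List α), (subwordTop θ).IsOpen W → σ.IsOpen W :=
  ⟨le_antisymm (le_subwordTop_of_le_Esub (Esub_mono subwordTop_le_Esub)) subwordTop_le_Esub,
    fun _ hσ => le_subwordTop_of_le_Esub hσ.ge⟩
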